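/- arXiv:2002.12526 — 4 statements merged into one kernel-verified Lean document; each statement's English description precedes it below -/
import Mathlib

section
/- Let K be a constant with 1/3 < K < 1, let μ = (3K−1)/(1−K), and let u₀ ∈ ℝ. Then there exists a unique function u : [0,1] → ℝ that is continuous on [0,1], infinitely differentiable on (0,1], satisfies u(0) = u₀, and satisfies the ODE u'(t) = K·μ·t^{2μ−1} / (t^{2μ} + (1−K)·e^{2u(t)}) for all t ∈ (0,1]. -/
open Real Set

open Filter Topology

noncomputable def hhP31 (c w : ℝ) : ℝ := Real.exp (c * w) - Real.exp (2 * w)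

lemma hhP31_contDiff (c : ℝ) : ContDiff ℝ (⊤ : ℕ∞) (hhP31 c) := by
  unfold hhP31; fun_prop

lemma hhP31_hasStrictDerivAt (c w : ℝ) :
    HasStrictDerivAt (hhP31 c) (c * Real.exp (c * w) - 2 * Real.exp (2 * w)) w := by
  have h1 : HasStrictDerivAt (fun w : ℝ => Real.exp (c * w)) (Real.exp (c * w) * c) w :=
    HasStrictDerivAt.exp (by simpa using (hasStrictDerivAt_id w).const_mul c)
  have h2 : HasStrictDerivAt (fun w : ℝ => Real.exp (2 * w)) (Real.exp (2 * w) * 2) w :=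
    HasStrictDerivAt.exp (by simpa using (hasStrictDerivAt_id w).const_mul 2)
  have := h1.sub h2
  unfold hhP31
  rw [show c * Real.exp (c * w) - 2 * Real.exp (2 * w) = Real.exp (c * w) * c - Real.exp (2 * w) * 2 by ring]; exact this

lemma hhP31_hasDerivAt (c w : ℝ) :
    HasDerivAt (hhP31 c) (c * Real.exp (c * w) - 2 * Real.exp (2 * w)) w :=
  (hhP31_hasStrictDerivAt c w).hasDerivAt

lemma hhP31_deriv_pos {c : ℝ} (hc : 2 < c) {w : ℝ} (hw : 0 ≤ w) :
    0 < c * Real.exp (c * w) - 2 * Real.exp (2 * w) := by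
  have h1 : Real.exp (2 * w) ≤ Real.exp (c * w) := by
    apply Real.exp_le_exp.2; nlinarith
  nlinarith [Real.exp_pos (2 * w), Real.exp_pos (c * w)]

lemma hhP31_zero (c : ℝ) : hhP31 c 0 = 0 := by simp [hhP31]

lemma hhP31_lower {c : ℝ} (hc : 2 < c) {w : ℝ} (hw : 0 ≤ w) :
    (c - 2) * w ≤ hhP31 c w := by
  have key : hhP31 c w = Real.exp (2 * w) * (Real.exp ((c - 2) * w) - 1) := by
    unfold hhP31; rw [mul_sub, ← Real.exp_add]; ring_nf
  have h1 : (c - 2) * w + 1 ≤ Real.exp ((c - 2) * w) := Real.add_one_le_exp _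
  have h2 : (1 : ℝ) ≤ Real.exp (2 * w) := Real.one_le_exp (by linarith)
  have h3 : (0 : ℝ) ≤ Real.exp ((c - 2) * w) - 1 := by
    have := Real.one_le_exp (show (0:ℝ) ≤ (c - 2) * w by nlinarith); linarith
  calc (c - 2) * w ≤ Real.exp ((c - 2) * w) - 1 := by linarith
    _ ≤ Real.exp (2 * w) * (Real.exp ((c - 2) * w) - 1) := le_mul_of_one_le_left h3 h2
    _ = hhP31 c w := key.symm

lemma hhP31_neg {c : ℝ} (hc : 2 < c) {w : ℝ} (hw : w < 0) : hhP31 c w < 0 := by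
  unfold hhP31
  have : c * w < 2 * w := by nlinarith
  have := Real.exp_lt_exp.2 this
  linarith

lemma nonneg_of_hhP31_nonneg {c : ℝ} (hc : 2 < c) {w : ℝ} (hw : 0 ≤ hhP31 c w) : 0 ≤ w := by
  by_contra h
  exact absurd hw (not_le.2 (hhP31_neg hc (not_le.1 h)))

lemma hhP31_strictMonoOn {c : ℝ} (hc : 2 < c) : StrictMonoOn (hhP31 c) (Ici 0) := by
  apply strictMonoOn_of_deriv_pos (convex_Ici 0) ((hhP31_contDiff c).continuous.continuousOn)
  intro w hw
  rw [interior_Ici] at hw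
  rw [(hhP31_hasDerivAt c w).deriv]
  exact hhP31_deriv_pos hc (le_of_lt hw)

lemma hhP31_root_exists {c : ℝ} (hc : 2 < c) {s : ℝ} (hs : 0 ≤ s) :
    ∃ w, 0 ≤ w ∧ hhP31 c w = s := by
  have hc2 : (0:ℝ) < c - 2 := by linarith
  have hW : 0 ≤ s / (c - 2) := by positivity
  have hup : s ≤ hhP31 c (s / (c - 2)) := by
    have := hhP31_lower hc hW
    rwa [mul_div_cancel₀ _ (ne_of_gt hc2)] at this
  have := intermediate_value_Icc hW ((hhP31_contDiff c).continuous.continuousOn)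
  have hmem : s ∈ Icc (hhP31 c 0) (hhP31 c (s / (c - 2))) := by
    rw [hhP31_zero]; exact ⟨hs, hup⟩
  obtain ⟨w, hw, hweq⟩ := this hmem
  exact ⟨w, hw.1, hweq⟩

lemma hhP31_root_unique {c : ℝ} (hc : 2 < c) {w₁ w₂ s : ℝ} (h₁ : hhP31 c w₁ = s)
    (h₂ : hhP31 c w₂ = s) (hs : 0 ≤ s) : w₁ = w₂ := by
  have hw₁ : 0 ≤ w₁ := nonneg_of_hhP31_nonneg hc (h₁ ▸ hs)
  have hw₂ : 0 ≤ w₂ := nonneg_of_hhP31_nonneg hc (h₂ ▸ hs)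
  exact (hhP31_strictMonoOn hc).injOn hw₁ hw₂ (h₁.trans h₂.symm)

noncomputable def phiP31 (c s : ℝ) : ℝ := Function.invFun (hhP31 c) s

lemma phiP31_spec {c : ℝ} (hc : 2 < c) {s : ℝ} (hs : 0 ≤ s) : hhP31 c (phiP31 c s) = s := by
  obtain ⟨w, _, hw⟩ := hhP31_root_exists hc hs
  exact Function.invFun_eq ⟨w, hw⟩

lemma phiP31_nonneg {c : ℝ} (hc : 2 < c) {s : ℝ} (hs : 0 ≤ s) : 0 ≤ phiP31 c s := by
  apply nonneg_of_hhP31_nonneg hc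
  rw [phiP31_spec hc hs]; exact hs

lemma phiP31_eq {c : ℝ} (hc : 2 < c) {s w : ℝ} (hs : 0 ≤ s) (hw : hhP31 c w = s) :
    phiP31 c s = w :=
  hhP31_root_unique hc (phiP31_spec hc hs) hw hs

lemma phiP31_zero {c : ℝ} (hc : 2 < c) : phiP31 c 0 = 0 :=
  phiP31_eq hc le_rfl (hhP31_zero c)

lemma phiP31_le {c : ℝ} (hc : 2 < c) {s : ℝ} (hs : 0 ≤ s) : phiP31 c s ≤ s / (c - 2) := by
  have h1 := hhP31_lower hc (phiP31_nonneg hc hs)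
  rw [phiP31_spec hc hs] at h1
  rw [le_div_iff₀ (by linarith : (0:ℝ) < c - 2)]
  linarith

lemma phiP31_pos {c : ℝ} (hc : 2 < c) {s : ℝ} (hs : 0 < s) : 0 < phiP31 c s := by
  rcases (phiP31_nonneg hc hs.le).lt_or_eq with h | h
  · exact h
  · exfalso
    have := phiP31_spec hc hs.le
    rw [← h, hhP31_zero] at this
    linarith

lemma phiP31_contDiffAt {c : ℝ} (hc : 2 < c) {s : ℝ} (hs : 0 < s) :
    ContDiffAt ℝ (⊤ : ℕ∞) (phiP31 c) s := by
  set w := phiP31 c s with hw_def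
  have hw : 0 < w := phiP31_pos hc hs
  have hspec : hhP31 c w = s := phiP31_spec hc hs.le
  set d := c * Real.exp (c * w) - 2 * Real.exp (2 * w) with hd_def
  have hd : d ≠ 0 := ne_of_gt (hhP31_deriv_pos hc hw.le)
  have hstrict : HasStrictDerivAt (hhP31 c) d w := hhP31_hasStrictDerivAt c w
  have hF : HasStrictFDerivAt (hhP31 c)
      (ContinuousLinearEquiv.unitsEquivAut ℝ (Units.mk0 d hd) : ℝ →L[ℝ] ℝ) w :=
    hstrict.hasStrictFDerivAt_equiv hd
  have hcd : ContDiffAt ℝ (⊤ : ℕ∞) (hhP31 c) w := (hhP31_contDiff c).contDiffAt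
  have hfd : HasFDerivAt (hhP31 c)
      ((ContinuousLinearEquiv.unitsEquivAut ℝ (Units.mk0 d hd) : ℝ ≃L[ℝ] ℝ) : ℝ →L[ℝ] ℝ) w :=
    hF.hasFDerivAt
  set g := hcd.localInverse hfd (by simp) with hg_def
  have hg_smooth : ContDiffAt ℝ (⊤ : ℕ∞) g s := by
    have := hcd.to_localInverse hfd (by simp)
    rwa [hspec] at this
  have hright : ∀ᶠ y in 𝓝 s, hhP31 c (g y) = y := by
    have := (hcd.hasStrictFDerivAt' hfd (by simp)).eventually_right_inverse
    rwa [hspec] at this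
  have hpos : ∀ᶠ y in 𝓝 s, 0 < y := eventually_gt_nhds hs
  have hEq : phiP31 c =ᶠ[𝓝 s] g := by
    filter_upwards [hright, hpos] with y hy1 hy2
    exact phiP31_eq hc hy2.le hy1
  exact hg_smooth.congr_of_eventuallyEq hEq

/-- Proposition 3.1 (existence and uniqueness): for `1/3 < K < 1`, `μ = (3K-1)/(1-K)`
and any `u₀ ∈ ℝ`, there is a unique function `u` on `[0,1]` that is continuous on `[0,1]`,
smooth on `(0,1]`, satisfies `u 0 = u₀` and solves the ODE
`u'(t) = K μ t^(2μ-1) / (t^(2μ) + (1-K) e^(2 u t))` on `(0,1]`. -/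
theorem stmt_0 (K μ u₀ : ℝ) (hK : 1/3 < K ∧ K < 1) (hμ : μ = (3*K - 1)/(1 - K)) :
    ∃ u : ℝ → ℝ,
      (ContinuousOn u (Icc 0 1) ∧ ContDiffOn ℝ (⊤ : ℕ∞) u (Ioc 0 1) ∧ u 0 = u₀ ∧
        (∀ t ∈ Ioc (0:ℝ) 1,
          HasDerivAt u (K * μ * t ^ (2*μ - 1) / (t ^ (2*μ) + (1 - K) * Real.exp (2 * u t))) t)) ∧
      (∀ v : ℝ → ℝ,
        (ContinuousOn v (Icc 0 1) ∧ ContDiffOn ℝ (⊤ : ℕ∞) v (Ioc 0 1) ∧ v 0 = u₀ ∧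
          (∀ t ∈ Ioc (0:ℝ) 1,
            HasDerivAt v (K * μ * t ^ (2*μ - 1) / (t ^ (2*μ) + (1 - K) * Real.exp (2 * v t))) t)) →
        ∀ t ∈ Icc (0:ℝ) 1, v t = u t) := by
  obtain ⟨hK1, hK2⟩ := hK
  have hK0 : 0 < K := by linarith
  have hμpos : 0 < μ := by rw [hμ]; apply div_pos <;> linarith
  have h2μ : 0 < 2 * μ := by linarith
  set c : ℝ := 2 / K with hc_def
  have hc : 2 < c := by rw [hc_def, lt_div_iff₀ hK0]; nlinarith
  have hcK : c * K = 2 := by rw [hc_def]; field_simp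
  set sfun : ℝ → ℝ := fun t => Real.exp (-(2 * u₀)) * t ^ (2 * μ) with hsfun_def
  set u : ℝ → ℝ := fun t => u₀ + phiP31 c (sfun t) with hu_def
  have hs_nonneg : ∀ t : ℝ, 0 ≤ t → 0 ≤ sfun t := fun t ht =>
    mul_nonneg (Real.exp_pos _).le (Real.rpow_nonneg ht _)
  have hs_pos : ∀ t : ℝ, 0 < t → 0 < sfun t := fun t ht =>
    mul_pos (Real.exp_pos _) (Real.rpow_pos_of_pos ht _)
  have hs0 : sfun 0 = 0 := by
    simp [hsfun_def, Real.zero_rpow (ne_of_gt h2μ)]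
  have hu0 : u 0 = u₀ := by simp [hu_def, hs0, phiP31_zero hc]
  have hkey : ∀ t : ℝ, 0 ≤ t → hhP31 c (u t - u₀) = sfun t := by
    intro t ht
    have : u t - u₀ = phiP31 c (sfun t) := by simp [hu_def]
    rw [this]
    exact phiP31_spec hc (hs_nonneg t ht)
  have hs_cd : ∀ t : ℝ, t ≠ 0 → ContDiffAt ℝ (⊤ : ℕ∞) sfun t := fun t ht =>
    contDiffAt_const.mul (Real.contDiffAt_rpow_const_of_ne ht)
  have hu_cd : ∀ t : ℝ, 0 < t → ContDiffAt ℝ (⊤ : ℕ∞) u t := by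
    intro t ht
    exact contDiffAt_const.add
      (((phiP31_contDiffAt hc (hs_pos t ht)).comp t (hs_cd t ht.ne')))
  -- continuity at 0
  have hu_cw0 : ContinuousWithinAt u (Icc (0:ℝ) 1) 0 := by
    have hsc : Tendsto sfun (𝓝[Icc (0:ℝ) 1] 0) (𝓝 0) := by
      have h1 : ContinuousAt sfun 0 :=
        continuousAt_const.mul (Real.continuousAt_rpow_const 0 (2*μ) (Or.inr h2μ.le))
      have h2 : Tendsto sfun (𝓝[Icc (0:ℝ) 1] 0) (𝓝 (sfun 0)) :=
        h1.tendsto.mono_left (nhdsWithin_le_nhds : 𝓝[Icc (0:ℝ) 1] 0 ≤ 𝓝 0)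
      rwa [hs0] at h2
    have hphi : Tendsto (fun t => phiP31 c (sfun t)) (𝓝[Icc (0:ℝ) 1] 0) (𝓝 0) := by
      apply tendsto_of_tendsto_of_tendsto_of_le_of_le'
        (tendsto_const_nhds : Tendsto (fun _ : ℝ => (0:ℝ)) (𝓝[Icc (0:ℝ) 1] 0) (𝓝 0))
        (h := fun t => sfun t / (c - 2))
      · have := hsc.div_const (c - 2)
        simpa using this
      · filter_upwards [self_mem_nhdsWithin] with t ht
        exact phiP31_nonneg hc (hs_nonneg t ht.1)
      · filter_upwards [self_mem_nhdsWithin] with t ht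
        exact phiP31_le hc (hs_nonneg t ht.1)
    have : Tendsto u (𝓝[Icc (0:ℝ) 1] 0) (𝓝 (u₀ + 0)) := tendsto_const_nhds.add hphi
    rw [add_zero] at this
    rw [ContinuousWithinAt, hu0]
    exact this
  have hu_cont : ContinuousOn u (Icc 0 1) := by
    intro t ht
    rcases ht.1.lt_or_eq with h | h
    · exact ((hu_cd t h).continuousAt.continuousWithinAt)
    · rw [← h]; exact hu_cw0
  have hu_smooth : ContDiffOn ℝ (⊤ : ℕ∞) u (Ioc 0 1) := fun t ht =>
    (hu_cd t ht.1).contDiffWithinAt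
  -- the ODE
  have hu_ode : ∀ t ∈ Ioc (0:ℝ) 1,
      HasDerivAt u (K * μ * t ^ (2*μ - 1) / (t ^ (2*μ) + (1 - K) * Real.exp (2 * u t))) t := by
    intro t ht
    obtain ⟨ht0, ht1⟩ := ht
    have hdiff : DifferentiableAt ℝ u t := (hu_cd t ht0).differentiableAt (by simp)
    have hu' : HasDerivAt u (deriv u t) t := hdiff.hasDerivAt
    set w : ℝ := u t - u₀ with hw_def
    have hhw : hhP31 c w = sfun t := hkey t ht0.le
    have hw_pos : 0 < w := by
      have h1 : 0 < hhP31 c w := by rw [hhw]; exact hs_pos t ht0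
      rcases lt_trichotomy w 0 with h | h | h
      · exact absurd h1 (not_lt.2 (hhP31_neg hc h).le)
      · rw [h, hhP31_zero] at h1; linarith
      · exact h
    set A : ℝ := Real.exp (c * w) with hA_def
    set B : ℝ := Real.exp (2 * w) with hB_def
    have hψ : HasDerivAt (fun τ => hhP31 c (u τ - u₀)) ((c * A - 2 * B) * deriv u t) t :=
      by have := (hhP31_hasDerivAt c w).comp t (hu'.sub_const u₀); exact this
    have hEv : sfun =ᶠ[𝓝 t] (fun τ => hhP31 c (u τ - u₀)) := by
      filter_upwards [isOpen_Ioi.mem_nhds ht0] with τ hτ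
      exact (hkey τ (le_of_lt hτ)).symm
    have hψ' : HasDerivAt sfun ((c * A - 2 * B) * deriv u t) t :=
      hψ.congr_of_eventuallyEq hEv
    have hs' : HasDerivAt sfun (Real.exp (-(2 * u₀)) * (2 * μ * t ^ (2 * μ - 1))) t := by
      exact (Real.hasDerivAt_rpow_const (p := 2*μ) (Or.inl ht0.ne')).const_mul _
    have hd_eq : (c * A - 2 * B) * deriv u t
        = Real.exp (-(2 * u₀)) * (2 * μ * t ^ (2 * μ - 1)) := hψ'.unique hs'
    have hder_pos : 0 < c * A - 2 * B := hhP31_deriv_pos hc hw_pos.le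
    have ht2μ : t ^ (2 * μ) = Real.exp (2 * u₀) * (A - B) := by
      have h1 : Real.exp (2 * u₀) * sfun t = t ^ (2 * μ) := by
        rw [hsfun_def]
        rw [← mul_assoc, ← Real.exp_add]
        simp
      rw [← h1, ← hhw]
      rfl
    have hexp2u : Real.exp (2 * u t) = Real.exp (2 * u₀) * B := by
      rw [hB_def, ← Real.exp_add]
      congr 1
      rw [hw_def]; ring
    have hAB : 0 < A - K * B := by
      have : B < A := Real.exp_lt_exp.2 (by nlinarith)
      nlinarith [Real.exp_pos (2 * w)]
    have hdenom : t ^ (2 * μ) + (1 - K) * Real.exp (2 * u t)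
        = Real.exp (2 * u₀) * (A - K * B) := by
      rw [ht2μ, hexp2u]; ring
    have hdval : deriv u t
        = Real.exp (-(2 * u₀)) * (2 * μ * t ^ (2 * μ - 1)) / (c * A - 2 * B) := by
      rw [eq_div_iff hder_pos.ne', mul_comm]
      exact hd_eq
    have hfinal : K * μ * t ^ (2*μ - 1) / (t ^ (2*μ) + (1 - K) * Real.exp (2 * u t))
        = deriv u t := by
      rw [hdenom, hdval, Real.exp_neg]
      rw [div_eq_div_iff (by positivity) hder_pos.ne']
      have hE : (0:ℝ) < Real.exp (2 * u₀) := Real.exp_pos _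
      have hK' : K ≠ 0 := hK0.ne'
      field_simp
      linear_combination (μ * t ^ (2 * μ - 1) * Real.exp (2 * u₀) * A) * hcK
        + (A * 2 - A * μ * t ^ (2 * μ - 1) * Real.exp (2 * u₀) * 2) * mul_inv_cancel₀ hK'
    rw [hfinal]
    exact hu'
  refine ⟨u, ⟨hu_cont, hu_smooth, hu0, hu_ode⟩, ?_⟩
  rintro v ⟨hv_cont, hv_smooth, hv0, hv_ode⟩
  set G : ℝ → ℝ := fun t => (t ^ (2*μ) + Real.exp (2 * v t)) * Real.exp (-(c * v t)) with hG_def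
  have hG_cont : ContinuousOn G (Icc 0 1) := by
    apply ContinuousOn.mul
    · apply ContinuousOn.add
      · intro t ht
        exact (Real.continuousAt_rpow_const t (2*μ) (Or.inr h2μ.le)).continuousWithinAt
      · exact Real.continuous_exp.comp_continuousOn (continuousOn_const.mul hv_cont)
    · exact Real.continuous_exp.comp_continuousOn (continuousOn_const.mul hv_cont).neg
  have hG_deriv : ∀ t ∈ Ioc (0:ℝ) 1, HasDerivAt G 0 t := by
    intro t ht
    obtain ⟨ht0, ht1⟩ := ht
    set v' := K * μ * t ^ (2*μ - 1) / (t ^ (2*μ) + (1 - K) * Real.exp (2 * v t)) with hv'_def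
    have hvt : HasDerivAt v v' t := hv_ode t ⟨ht0, ht1⟩
    have h1 : HasDerivAt (fun τ : ℝ => τ ^ (2*μ)) (2*μ * t ^ (2*μ - 1)) t :=
      Real.hasDerivAt_rpow_const (Or.inl ht0.ne')
    have h2 : HasDerivAt (fun τ => Real.exp (2 * v τ)) (Real.exp (2 * v t) * (2 * v')) t :=
      (hvt.const_mul 2).exp
    have h3 : HasDerivAt (fun τ => Real.exp (-(c * v τ)))
        (Real.exp (-(c * v t)) * (-(c * v'))) t := ((hvt.const_mul c).neg).exp
    have h4 := (h1.add h2).mul h3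
    have hD : 0 < t ^ (2*μ) + (1 - K) * Real.exp (2 * v t) := by
      have := Real.rpow_pos_of_pos ht0 (2*μ)
      nlinarith [Real.exp_pos (2 * v t)]
    have hzero : (2*μ * t ^ (2*μ-1) + Real.exp (2 * v t) * (2 * v'))
          * Real.exp (-(c * v t))
        + (t ^ (2*μ) + Real.exp (2 * v t)) * (Real.exp (-(c * v t)) * (-(c * v'))) = 0 := by
      rw [hv'_def, hc_def]
      have hD' := hD.ne'
      have hK' : K ≠ 0 := hK0.ne'
      linear_combination (-(2 * μ * t ^ (2*μ-1) * Real.exp (-(2 / K * v t)))) * mul_inv_cancel₀ hD'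
        - ((t ^ (2*μ) + Real.exp (2 * v t)) * Real.exp (-(2 / K * v t)) * 2 * μ * t ^ (2*μ-1)
          * (t ^ (2*μ) + (1 - K) * Real.exp (2 * v t))⁻¹) * mul_inv_cancel₀ hK'
    rw [Pi.add_apply, hzero] at h4
    exact h4
  have hG_const : ∀ t ∈ Ioc (0:ℝ) 1, G t = G 1 := by
    intro t ht
    have hsub : Icc t 1 ⊆ Icc (0:ℝ) 1 := Icc_subset_Icc ht.1.le le_rfl
    have h1 := constant_of_has_deriv_right_zero (hG_cont.mono hsub)
      (fun x hx => (hG_deriv x ⟨lt_of_lt_of_le ht.1 hx.1, hx.2.le⟩).hasDerivWithinAt)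
      1 ⟨ht.2, le_rfl⟩
    exact h1.symm
  have h0cl : (0:ℝ) ∈ closure (Ioc (0:ℝ) 1) := by
    rw [closure_Ioc (zero_ne_one)]
    exact ⟨le_rfl, zero_le_one⟩
  haveI : (𝓝[Ioc (0:ℝ) 1] (0:ℝ)).NeBot := mem_closure_iff_nhdsWithin_neBot.1 h0cl
  have hT1 : Tendsto G (𝓝[Ioc (0:ℝ) 1] 0) (𝓝 (G 0)) :=
    (hG_cont 0 ⟨le_rfl, zero_le_one⟩).mono Ioc_subset_Icc_self
  have hT2 : Tendsto G (𝓝[Ioc (0:ℝ) 1] 0) (𝓝 (G 1)) := by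
    apply Tendsto.congr' _ tendsto_const_nhds
    filter_upwards [self_mem_nhdsWithin] with τ hτ
    exact (hG_const τ hτ).symm
  have hG01 : G 0 = G 1 := tendsto_nhds_unique hT1 hT2
  have hG0 : G 0 = Real.exp (2*u₀) * Real.exp (-(c*u₀)) := by
    simp [hG_def, hv0, Real.zero_rpow h2μ.ne']
  intro t ht
  rcases ht.1.lt_or_eq with h | h
  · have hGt : G t = Real.exp (2*u₀) * Real.exp (-(c*u₀)) := by
      rw [hG_const t ⟨h, ht.2⟩, ← hG01, hG0]
    have hone : Real.exp (-(c * v t)) * Real.exp (c * v t) = 1 := by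
      rw [← Real.exp_add]; simp
    have h1 : t ^ (2*μ) + Real.exp (2 * v t)
        = Real.exp (2*u₀) * Real.exp (-(c*u₀)) * Real.exp (c * v t) := by
      have h2 : G t * Real.exp (c * v t)
          = Real.exp (2*u₀) * Real.exp (-(c*u₀)) * Real.exp (c * v t) := by rw [hGt]
      rw [hG_def] at h2
      simp only at h2
      rw [mul_assoc, hone, mul_one] at h2
      exact h2
    have hkey_v : hhP31 c (v t - u₀) = sfun t := by
      show Real.exp (c * (v t - u₀)) - Real.exp (2 * (v t - u₀))
        = Real.exp (-(2 * u₀)) * t ^ (2 * μ)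
      rw [show c * (v t - u₀) = c * v t - c * u₀ by ring,
        show 2 * (v t - u₀) = 2 * v t - 2 * u₀ by ring]
      simp only [Real.exp_sub, Real.exp_neg] at h1 ⊢
      field_simp at h1 ⊢
      linear_combination (-1) * h1
    have hkey_u : hhP31 c (u t - u₀) = sfun t := hkey t h.le
    have := hhP31_root_unique hc hkey_v hkey_u (hs_nonneg t h.le)
    linarith
  · rw [← h, hv0, hu0]
end

section
/- Let K be a constant with 1/3 < K < 1, let μ = (3K−1)/(1−K), and let u : [0,1] → ℝ be continuous on [0,1], differentiable on (0,1], and satisfy u'(t) = K·μ·t^{2μ−1} / (t^{2μ} + (1−K)·e^{2u(t)}) for all t ∈ (0,1]. Then there exists a constant C > 0 such that |u(t) − u(0)| ≤ C·t^{2μ} and |u'(t)| ≤ C·t^{2μ−1} for all t ∈ (0,1]. -/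
/-!
Since `u` is continuous on `[0,1]`, it is bounded below there, say by `m`. The denominator of the
right-hand side is then at least `(1 - K) e^{2m} > 0`, so `|u'(t)| ≤ C₁ t^{2μ-1}` with
`C₁ = Kμ / ((1 - K) e^{2m})`. Comparing `u` with `± C₁/(2μ) · t^{2μ}`, whose derivative is
`± C₁ t^{2μ-1}`, gives `|u(t) - u(0)| ≤ C₁/(2μ) · t^{2μ}`.
-/

open Real Set

theorem hasDerivAt_const_div_mul_rpow {p : ℝ} (hp : p ≠ 0) (C : ℝ) {s : ℝ} (hs : 0 < s) :
    HasDerivAt (fun x => C / p * x ^ p) (C * s ^ (p - 1)) s :=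
  ((hasDerivAt_rpow_const (Or.inl hs.ne')).const_mul (C / p)).congr_deriv <| by
    rw [← mul_assoc, div_mul_cancel₀ _ hp]

theorem abs_sub_le_rpow_of_abs_deriv_le {u u' : ℝ → ℝ} {C p b : ℝ} (hp : 0 < p)
    (hu : ContinuousOn u (Icc 0 b)) (hderiv : ∀ t ∈ Ioo 0 b, HasDerivAt u (u' t) t)
    (hbound : ∀ t ∈ Ioo 0 b, |u' t| ≤ C * t ^ (p - 1)) :
    ∀ t ∈ Icc 0 b, |u t - u 0| ≤ C / p * t ^ p := by
  set g : ℝ → ℝ := fun x => C / p * x ^ p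
  have hg' : ∀ s ∈ Ioo 0 b, HasDerivAt g (C * s ^ (p - 1)) s := fun s hs =>
    hasDerivAt_const_div_mul_rpow hp.ne' C hs.1
  have hg : ContinuousOn g (Icc 0 b) :=
    continuousOn_const.mul (continuousOn_id.rpow_const fun _ _ => Or.inr hp.le)
  have hsub : AntitoneOn (fun x => u x - g x) (Icc 0 b) := by
    refine antitoneOn_of_hasDerivWithinAt_nonpos (f' := fun t => u' t - C * t ^ (p - 1))
      (convex_Icc 0 b) (hu.sub hg) (fun t ht => ?_) fun t ht => ?_
    · rw [interior_Icc] at ht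
      exact ((hderiv t ht).sub (hg' t ht)).hasDerivWithinAt
    · rw [interior_Icc] at ht
      linarith [(abs_le.1 (hbound t ht)).2]
  have hadd : MonotoneOn (fun x => u x + g x) (Icc 0 b) := by
    refine monotoneOn_of_hasDerivWithinAt_nonneg (f' := fun t => u' t + C * t ^ (p - 1))
      (convex_Icc 0 b) (hu.add hg) (fun t ht => ?_) fun t ht => ?_
    · rw [interior_Icc] at ht
      exact ((hderiv t ht).add (hg' t ht)).hasDerivWithinAt
    · rw [interior_Icc] at ht
      linarith [(abs_le.1 (hbound t ht)).1]
  intro t ht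
  have h0 : (0 : ℝ) ∈ Icc 0 b := ⟨le_rfl, ht.1.trans ht.2⟩
  have hg0 : g 0 = 0 := by simp [g, zero_rpow hp.ne']
  have hupper := hsub h0 ht ht.1
  have hlower := hadd h0 ht ht.1
  simp only [hg0] at hupper hlower
  exact abs_le.2 ⟨by linarith, by linarith⟩

theorem abs_div_add_le_div {a x y c : ℝ} (ha : 0 ≤ a) (hx : 0 ≤ x) (hc : 0 < c) (hcy : c ≤ y) :
    |a / (x + y)| ≤ a / c := by
  rw [abs_of_nonneg (div_nonneg ha (by linarith))]
  exact div_le_div_of_nonneg_left ha hc (by linarith)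

/-- Proposition 3.1, estimate (3.12): any solution of the background ODE that is continuous
on `[0,1]` satisfies `|u(t) - u(0)| ≤ C t^(2μ)` and `|u'(t)| ≤ C t^(2μ-1)` on `(0,1]`. -/
theorem stmt_1 (K μ : ℝ) (hK : 1/3 < K ∧ K < 1) (hμ : μ = (3*K - 1)/(1 - K))
    (u : ℝ → ℝ) (hcont : ContinuousOn u (Icc 0 1))
    (hODE : ∀ t ∈ Ioc (0:ℝ) 1,
      HasDerivAt u (K * μ * t ^ (2*μ - 1) / (t ^ (2*μ) + (1 - K) * Real.exp (2 * u t))) t) :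
    ∃ C > 0, ∀ t ∈ Ioc (0:ℝ) 1,
      |u t - u 0| ≤ C * t ^ (2*μ) ∧ |deriv u t| ≤ C * t ^ (2*μ - 1) := by
  have h1K : 0 < 1 - K := by linarith
  have hμpos : 0 < μ := hμ ▸ div_pos (by linarith) h1K
  have hKμ : 0 < K * μ := mul_pos (by linarith) hμpos
  obtain ⟨m, hm⟩ := isCompact_Icc.bddBelow_image hcont
  set C₁ := K * μ / ((1 - K) * exp (2 * m))
  have hderiv : ∀ t ∈ Ioc (0:ℝ) 1, |deriv u t| ≤ C₁ * t ^ (2*μ - 1) := fun t ht => by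
    rw [(hODE t ht).deriv]
    refine (abs_div_add_le_div (mul_nonneg hKμ.le (rpow_nonneg ht.1.le _))
      (rpow_nonneg ht.1.le _) (mul_pos h1K (exp_pos _)) ?_).trans_eq
      (mul_div_right_comm _ _ _)
    have hmu : m ≤ u t := hm (mem_image_of_mem u (Ioc_subset_Icc_self ht))
    gcongr
  have hdiff := abs_sub_le_rpow_of_abs_deriv_le (by positivity) hcont
    (fun t ht => (hODE t (Ioo_subset_Ioc_self ht)).differentiableAt.hasDerivAt)
    (fun t ht => hderiv t (Ioo_subset_Ioc_self ht))
  refine ⟨max C₁ (C₁ / (2 * μ)), by positivity, fun t ht => ⟨?_, ?_⟩⟩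
  · exact (hdiff t (Ioc_subset_Icc_self ht)).trans
      (mul_le_mul_of_nonneg_right (le_max_right _ _) (rpow_nonneg ht.1.le _))
  · exact (hderiv t ht).trans
      (mul_le_mul_of_nonneg_right (le_max_left _ _) (rpow_nonneg ht.1.le _))
end

section
/- Let K be a constant with 1/3 < K < 1, let μ = (3K−1)/(1−K), let 0 ≤ T < 1, and let u : (T,1] → ℝ be differentiable with u'(t) = K·μ·t^{2μ−1} / (t^{2μ} + (1−K)·e^{2u(t)}) for all t ∈ (T,1]. Set c = (K/2)·ln(1 + e^{2u(1)}) − u(1). Then −c/(1−K) ≤ u(t) ≤ u(1) for all t ∈ (T,1]. -/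
/-!
Along solutions the quantity `u t - (K/2) log (t^(2μ) + exp (2 u t))` is a first integral:
its derivative vanishes exactly because of the ODE. Since `log (t^(2μ) + exp (2u)) ≥ 2u`,
comparing its values at `t` and at `1` gives `(1 - K) u t ≥ -c`. The upper bound holds because
the right-hand side of the ODE is nonnegative, so `u` is nondecreasing.
-/

open Real Set

theorem Convex.eq_of_forall_hasDerivAt_zero {s : Set ℝ} (hs : Convex ℝ s) {f : ℝ → ℝ}
    (hf : ∀ x ∈ s, HasDerivAt f 0 x) {x y : ℝ} (hx : x ∈ s) (hy : y ∈ s) : f x = f y := by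
  have h := hs.norm_image_sub_le_of_norm_hasDerivWithin_le (C := 0)
    (fun z hz => (hf z hz).hasDerivWithinAt) (fun _ _ => by simp) hx hy
  rw [zero_mul, norm_le_zero_iff, sub_eq_zero] at h
  exact h.symm

theorem Convex.monotoneOn_of_forall_hasDerivAt_nonneg {s : Set ℝ} (hs : Convex ℝ s)
    {f f' : ℝ → ℝ} (hf : ∀ x ∈ s, HasDerivAt f (f' x) x) (hf' : ∀ x ∈ s, 0 ≤ f' x) :
    MonotoneOn f s :=
  monotoneOn_of_hasDerivWithinAt_nonneg hs
    (fun x hx => (hf x hx).continuousAt.continuousWithinAt)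
    (fun x hx => (hf x (interior_subset hx)).hasDerivWithinAt)
    (fun x hx => hf' x (interior_subset hx))

theorem Real.le_log_add_exp {x : ℝ} (hx : 0 ≤ x) (y : ℝ) : y ≤ log (x + exp y) := by
  rw [le_log_iff_exp_le (by positivity)]
  linarith

noncomputable def backgroundFirstIntegral (K μ : ℝ) (u : ℝ → ℝ) (t : ℝ) : ℝ :=
  u t - K / 2 * log (t ^ (2 * μ) + exp (2 * u t))

theorem hasDerivAt_backgroundFirstIntegral {K μ t : ℝ} {u : ℝ → ℝ} (hK : K < 1) (ht : 0 < t)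
    (hu : HasDerivAt u (K * μ * t ^ (2 * μ - 1) / (t ^ (2 * μ) + (1 - K) * exp (2 * u t))) t) :
    HasDerivAt (backgroundFirstIntegral K μ u) 0 t := by
  have hpow : HasDerivAt (fun s : ℝ => s ^ (2 * μ)) (2 * μ * t ^ (2 * μ - 1)) t :=
    hasDerivAt_rpow_const (Or.inl ht.ne')
  have hsum_pos : 0 < t ^ (2 * μ) + exp (2 * u t) := by positivity
  have hden_pos : 0 < t ^ (2 * μ) + (1 - K) * exp (2 * u t) :=
    add_pos (rpow_pos_of_pos ht _) (mul_pos (by linarith) (exp_pos _))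
  have hlog := (hpow.add (hu.const_mul 2).exp).log hsum_pos.ne'
  refine (hu.sub (hlog.const_mul (K / 2))).congr_deriv ?_
  rw [Pi.add_apply]
  generalize t ^ (2 * μ) = a at hsum_pos hden_pos ⊢
  generalize exp (2 * u t) = e at hsum_pos hden_pos ⊢
  field_simp
  ring

/-- A priori bounds (3.16)-(3.17) from the proof of Proposition 3.1: with
`c = (K/2) ln(1 + e^(2 u(1))) - u(1)`, any solution of the background ODE on `(T,1]`
satisfies `-c/(1-K) ≤ u(t) ≤ u(1)`. -/
theorem stmt_3 (K μ T : ℝ) (hK : 1/3 < K ∧ K < 1) (hμ : μ = (3*K - 1)/(1 - K))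
    (hT : 0 ≤ T ∧ T < 1) (u : ℝ → ℝ)
    (hODE : ∀ t ∈ Ioc T 1,
      HasDerivAt u (K * μ * t ^ (2*μ - 1) / (t ^ (2*μ) + (1 - K) * Real.exp (2 * u t))) t) :
    ∀ t ∈ Ioc T 1,
      -((K/2) * Real.log (1 + Real.exp (2 * u 1)) - u 1) / (1 - K) ≤ u t ∧ u t ≤ u 1 := by
  obtain ⟨hK₁, hK₂⟩ := hK
  have hK_pos : 0 < K := by linarith
  have hμ_pos : 0 < μ := hμ ▸ div_pos (by linarith) (by linarith)
  have hpos : ∀ s ∈ Ioc T 1, 0 < s := fun s hs => hT.1.trans_lt hs.1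
  have hone : (1 : ℝ) ∈ Ioc T 1 := right_mem_Ioc.2 hT.2
  intro t ht
  constructor
  · have hconst := (convex_Ioc T 1).eq_of_forall_hasDerivAt_zero
      (fun s hs => hasDerivAt_backgroundFirstIntegral hK₂ (hpos s hs) (hODE s hs)) ht hone
    simp only [backgroundFirstIntegral, one_rpow] at hconst
    have hlog := le_log_add_exp (rpow_nonneg (hpos t ht).le (2 * μ)) (2 * u t)
    have := mul_le_mul_of_nonneg_left hlog hK_pos.le
    rw [div_le_iff₀ (by linarith)]
    linarith
  · refine (convex_Ioc T 1).monotoneOn_of_forall_hasDerivAt_nonneg hODE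
      (fun s hs => ?_) ht hone ht.2
    have := hpos s hs
    positivity
end

section
/- Let K be a constant with 1/3 < K < 1, let μ = (3K−1)/(1−K), and let u : (0,1] → ℝ be a bounded function. Define, for t ∈ (0,1] and w̃ ∈ ℝ, F̃₂(t, w̃) = −t^{2μ−1}·K·(3K−1)·(e^{2w̃} − 1)·e^{4u(t)+2w̃} / ( (t^{2μ} − (K−1)·e^{2u(t)})·(t^{2μ} + e^{2(u(t)+w̃)})² ). Then for every R > 0 there exists a constant C > 0 such that |F̃₂(t, w̃)| ≤ C·t^{2μ−1}·|w̃| for all t ∈ (0,1] and all w̃ ∈ [−R, R]. -/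
open Real Set

lemma abs_exp_sub_one_le' (x : ℝ) : |Real.exp x - 1| ≤ |x| * Real.exp |x| := by
  rcases le_or_gt 0 x with h | h
  · rw [abs_of_nonneg h, abs_of_nonneg (by linarith [Real.one_le_exp h] : (0:ℝ) ≤ Real.exp x - 1)]
    have h1 : (-x + 1) * Real.exp x ≤ Real.exp (-x) * Real.exp x :=
      mul_le_mul_of_nonneg_right (by linarith [Real.add_one_le_exp (-x)]) (Real.exp_pos x).le
    have h2 : Real.exp (-x) * Real.exp x = 1 := by
      rw [← Real.exp_add]; simp
    nlinarith
  · rw [abs_of_neg h, abs_of_nonpos (by linarith [Real.exp_lt_one_iff.mpr h] : Real.exp x - 1 ≤ 0)]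
    have h1 := Real.add_one_le_exp x
    have h2 := Real.one_le_exp (by linarith : (0:ℝ) ≤ -x)
    nlinarith

set_option maxHeartbeats 2000000 in
/-- Estimate (6.16): the only nonvanishing component `F̃₂` of the source term (6.5) of the
`𝕋²`-symmetric reduction satisfies `|F̃₂(t,w̃)| ≤ C t^(2μ-1) |w̃|` on `(0,1] × [-R,R]`. -/
theorem stmt_14 (K μ : ℝ) (hK : 1/3 < K ∧ K < 1) (hμ : μ = (3*K - 1)/(1 - K))
    (u : ℝ → ℝ) (hbd : ∃ M : ℝ, ∀ t ∈ Ioc (0:ℝ) 1, |u t| ≤ M) :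
    ∀ R > 0, ∃ C > 0, ∀ t ∈ Ioc (0:ℝ) 1, ∀ w ∈ Icc (-R) R,
      |(-(t ^ (2*μ - 1) * K * (3*K - 1) * (Real.exp (2*w) - 1) *
          Real.exp (4 * u t + 2*w)) /
        ((t ^ (2*μ) - (K - 1) * Real.exp (2 * u t)) *
          (t ^ (2*μ) + Real.exp (2 * (u t + w)))^2))| ≤ C * t ^ (2*μ - 1) * |w| := by
  obtain ⟨hK1, hK2⟩ := hK
  obtain ⟨M, hM⟩ := hbd
  have hM0 : 0 ≤ M := le_trans (abs_nonneg _) (hM 1 ⟨one_pos, le_refl 1⟩)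
  intro R hR
  have hKpos : 0 < K := by linarith
  have h3K : 0 < 3*K - 1 := by linarith
  have h1K : 0 < 1 - K := by linarith
  refine ⟨2*K*(3*K-1)*Real.exp (2*M + 4*R)/(1-K), div_pos (by positivity) h1K, ?_⟩
  intro t ht w hw
  obtain ⟨ht0, ht1⟩ := ht
  obtain ⟨hw1, hw2⟩ := hw
  have hut := hM t ⟨ht0, ht1⟩
  rw [abs_le] at hut
  have ha : 0 < t ^ (2*μ - 1) := Real.rpow_pos_of_pos ht0 _
  have hb : 0 < t ^ (2*μ) := Real.rpow_pos_of_pos ht0 _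
  set E1 := Real.exp (2 * u t) with hE1
  set E2 := Real.exp (2 * (u t + w)) with hE2
  set E3 := Real.exp (4 * u t + 2*w) with hE3
  have hE1p : 0 < E1 := Real.exp_pos _
  have hE2p : 0 < E2 := Real.exp_pos _
  have hE3p : 0 < E3 := Real.exp_pos _
  have hD1 : (1-K) * E1 ≤ t ^ (2*μ) - (K - 1) * E1 := by nlinarith
  have hD2 : E2^2 ≤ (t ^ (2*μ) + E2)^2 := by nlinarith
  have hB : 0 < ((1-K) * E1) * E2^2 := by positivity
  have hD1' : 0 < t ^ (2*μ) - (K - 1) * E1 := by nlinarith [mul_pos h1K hE1p]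
  have hD : 0 < (t ^ (2*μ) - (K - 1) * E1) * (t ^ (2*μ) + E2)^2 := by positivity
  rw [abs_div, abs_neg, abs_of_pos hD]
  have hnum : |t ^ (2*μ - 1) * K * (3*K - 1) * (Real.exp (2*w) - 1) * E3|
      = t ^ (2*μ - 1) * K * (3*K - 1) * |Real.exp (2*w) - 1| * E3 := by
    rw [abs_mul, abs_mul, abs_mul, abs_mul,
      abs_of_pos ha, abs_of_pos hKpos, abs_of_pos h3K, abs_of_pos hE3p]
  rw [hnum]
  have hexp : |Real.exp (2*w) - 1| ≤ 2 * |w| * Real.exp (2*R) := by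
    have := abs_exp_sub_one_le' (2*w)
    have h2w : |2*w| = 2 * |w| := by rw [abs_mul]; simp [abs_of_nonneg]
    have hwR : |w| ≤ R := abs_le.mpr ⟨hw1, hw2⟩
    calc |Real.exp (2*w) - 1| ≤ |2*w| * Real.exp |2*w| := this
      _ = 2*|w| * Real.exp (2*|w|) := by rw [h2w]
      _ ≤ 2*|w| * Real.exp (2*R) :=
          mul_le_mul_of_nonneg_left (Real.exp_le_exp.mpr (by linarith)) (by positivity)
  -- chain of bounds
  have step1 : t ^ (2*μ - 1) * K * (3*K - 1) * |Real.exp (2*w) - 1| * E3 /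
      ((t ^ (2*μ) - (K - 1) * E1) * (t ^ (2*μ) + E2)^2)
      ≤ t ^ (2*μ - 1) * K * (3*K - 1) * (2 * |w| * Real.exp (2*R)) * E3 /
      (((1-K) * E1) * E2^2) := by
    apply div_le_div₀ (by positivity) ?_ hB ?_
    · gcongr
    · gcongr
  refine le_trans step1 ?_
  rw [div_le_iff₀ hB]
  have h5 : Real.exp (2*R) * E3 ≤ Real.exp (2*M + 4*R) * (E1 * E2^2) := by
    rw [hE1, hE2, hE3, sq, ← Real.exp_add, ← Real.exp_add, ← Real.exp_add, ← Real.exp_add]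
    apply Real.exp_le_exp.mpr
    linarith [hut.1, hut.2]
  have hCB : 2*K*(3*K-1)*Real.exp (2*M + 4*R)/(1-K) * t ^ (2*μ - 1) * |w| * ((1-K)*E1*E2^2)
      = t ^ (2*μ - 1) * K * (3*K - 1) * (2*|w|) * (Real.exp (2*M + 4*R) * (E1*E2^2)) := by
    field_simp
  rw [hCB]
  nlinarith [mul_le_mul_of_nonneg_left h5 (by positivity : (0:ℝ) ≤ t ^ (2*μ - 1) * K * (3*K - 1) * (2*|w|))]
end
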